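/- Let (G,·,▷,Φ) be a twisted post group. Then Φ is idempotent (Φ∘Φ = Φ) if and only if Φ(1) = 1, where 1 is the identity of (G,·). -/

import Mathlib

/-- A (left) twisted post group: a group `G` with a binary operation `tri` (written `▷`)
and a cocycle `phi` such that each left multiplication `tri a` is a group automorphism,
`(a ∘ b) ▷ c = a ▷ (b ▷ c)` and `Φ(a ∘ b) = a ∘ Φ(b)`, where `a ∘ b = Φ(a)·(a ▷ b)`. -/
structure TPG (G : Type*) [Group G] where
  tri : G → G → G
  phi : G → G
  tri_mul : ∀ a b c : G, tri a (b * c) = tri a b * tri a c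
  tri_bij : ∀ a : G, Function.Bijective (tri a)
  tri_assoc : ∀ a b c : G, tri (phi a * tri a b) c = tri a (tri b c)
  phi_comp : ∀ a b : G, phi (phi a * tri a b) = phi a * tri a (phi b)

namespace TPG

variable {G : Type*} [Group G] (T : TPG G)

/-- The sub-adjacent operation `a ∘ b = Φ(a)·(a ▷ b)`. -/
def circ (a b : G) : G := T.phi a * T.tri a b

/-- `e_a = (L_a^▷)⁻¹(Φ(a)⁻¹·a)`. -/
noncomputable def e (a : G) : G := Function.invFun (T.tri a) ((T.phi a)⁻¹ * a)

/-- `a† = (L_a^▷)⁻¹(Φ(a)⁻¹·e_a)`. -/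
noncomputable def dag (a : G) : G := Function.invFun (T.tri a) ((T.phi a)⁻¹ * T.e a)

end TPG

/-! Since `a ▷ 1 = 1`, the cocycle identity at `b = 1` reads `Φ(Φ a) = Φ a · (a ▷ Φ 1)`,
and `a ▷ -` is injective. -/

namespace TPG

variable {G : Type*} [Group G] (T : TPG G)

theorem tri_one (a : G) : T.tri a 1 = 1 :=
  left_eq_mul.mp (by simpa only [one_mul] using T.tri_mul a 1 1)

theorem tri_eq_one_iff {a b : G} : T.tri a b = 1 ↔ b = 1 :=
  ⟨fun h => (T.tri_bij a).injective (h.trans (T.tri_one a).symm), fun h => h ▸ T.tri_one a⟩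

theorem phi_phi (a : G) : T.phi (T.phi a) = T.phi a * T.tri a (T.phi 1) := by
  simpa only [tri_one, mul_one] using T.phi_comp a 1

end TPG

/-- The cocycle of a twisted post group is idempotent iff `Φ(1) = 1`. -/
theorem idempotent_iff {G : Type*} [Group G] (T : TPG G) :
    (∀ a : G, T.phi (T.phi a) = T.phi a) ↔ T.phi 1 = 1 := by
  constructor
  · intro h
    simpa only [T.phi_phi, mul_eq_left, T.tri_eq_one_iff] using h 1
  · intro h a
    rw [T.phi_phi, h, T.tri_one, mul_one]
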